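/- For each m ∈ (θ,1): F(s) > F(m) for all s ∈ [0,m), the integral L_m := ∫₀^m ds/√(F(s) − F(m)) is finite and positive, and there exists a function v_m ∈ C²([0, 2L_m]) with v_m'' + f(v_m) = 0 on [0,2L_m], v_m(0) = v_m(2L_m) = 0, 0 < v_m ≤ m on (0,2L_m), v_m(L_m) = m, and v_m'(x)² = F(v_m(x)) − F(m) for all x ∈ [0,2L_m]. -/

import Mathlib

open Set Filter MeasureTheory

noncomputable def Fint (f : ℝ → ℝ) (u : ℝ) : ℝ := -2 * ∫ s in (0:ℝ)..u, f s

structure CondF (f : ℝ → ℝ) (α θ lam : ℝ) : Prop where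
  smooth : ContDiff ℝ 1 f
  f_zero : f 0 = 0
  df_zero : deriv f 0 < 0
  lam_def : lam = Real.sqrt (-(deriv f 0))
  alpha_pos : 0 < α
  alpha_lt : α < 1
  neg_low : ∀ s ∈ Set.Ioo (0:ℝ) α, f s < 0
  pos_mid : ∀ s ∈ Set.Ioo α (1:ℝ), 0 < f s
  neg_high : ∀ s ∈ Set.Ioi (1:ℝ), f s < 0
  df_bdd : BddBelow (deriv f '' Set.Ioi (1:ℝ))
  theta_gt : α < θ
  theta_lt : θ < 1
  F_theta : Fint f θ = 0

open Topology

/-!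
`Fint f` increases on `[0, α]` and decreases on `[α, 1]`, and `Fint f θ = 0`, so
`G = Fint f - Fint f m` is positive on `[0, m)`. At `m` it vanishes only linearly, because `f > 0`
on `[θ, m]`, so `1 / √G` is integrable up to `m`. The solution comes from the energy equation
`v'² = G v`: the travel time `T u = ∫₀ᵘ 1 / √G` is strictly increasing, and its inverse solves
`v' = √(G v)`, hence `v'' = -f v`, and reaches the turning point `m` at time `L` with zero
velocity. The even reflection about `L` continues it to a `C²` solution on `[0, 2L]`. The
statement uses two-sided derivatives at `0` and `2L`, so the construction starts slightly below
`0`.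
-/

section Fint

variable {f : ℝ → ℝ}

theorem hasDerivAt_Fint (hf : Continuous f) (u : ℝ) : HasDerivAt (Fint f) (-2 * f u) u :=
  (intervalIntegral.integral_hasDerivAt_right (hf.intervalIntegrable 0 u)
    hf.stronglyMeasurable.stronglyMeasurableAtFilter hf.continuousAt).const_mul (-2)

theorem continuous_Fint (hf : Continuous f) : Continuous (Fint f) :=
  continuous_iff_continuousAt.2 fun u => (hasDerivAt_Fint hf u).continuousAt

theorem Fint_zero : Fint f 0 = 0 := by simp [Fint]

theorem Fint_sub_Fint (hf : Continuous f) (s m : ℝ) :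
    Fint f s - Fint f m = 2 * ∫ x in s..m, f x := by
  rw [Fint, Fint, ← intervalIntegral.integral_add_adjacent_intervals (hf.intervalIntegrable 0 s)
    (hf.intervalIntegrable s m)]
  ring

theorem mul_sub_le_Fint_sub_Fint (hf : Continuous f) {s m k : ℝ} (hsm : s ≤ m)
    (hk : ∀ x ∈ Icc s m, k ≤ f x) : 2 * k * (m - s) ≤ Fint f s - Fint f m := by
  have := intervalIntegral.integral_mono_on hsm (intervalIntegrable_const (μ := volume))
    (hf.intervalIntegrable s m) hk
  rw [intervalIntegral.integral_const, smul_eq_mul] at this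
  rw [Fint_sub_Fint hf]
  linarith

theorem strictMonoOn_Fint (hf : Continuous f) {a b : ℝ} (hneg : ∀ s ∈ Ioo a b, f s < 0) :
    StrictMonoOn (Fint f) (Icc a b) := by
  refine strictMonoOn_of_deriv_pos (convex_Icc a b) (continuous_Fint hf).continuousOn
    fun x hx => ?_
  rw [interior_Icc] at hx
  rw [(hasDerivAt_Fint hf x).deriv]
  linarith [hneg x hx]

theorem strictAntiOn_Fint (hf : Continuous f) {a b : ℝ} (hpos : ∀ s ∈ Ioo a b, 0 < f s) :
    StrictAntiOn (Fint f) (Icc a b) := by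
  refine strictAntiOn_of_deriv_neg (convex_Icc a b) (continuous_Fint hf).continuousOn
    fun x hx => ?_
  rw [interior_Icc] at hx
  rw [(hasDerivAt_Fint hf x).deriv]
  linarith [hpos x hx]

end Fint

theorem intervalIntegrable_one_div_sqrt_of_mul_sub_le {G : ℝ → ℝ} {a b k : ℝ}
    (hG : Continuous G) (hab : a ≤ b) (hk : 0 < k) (hbound : ∀ s ∈ Icc a b, k * (b - s) ≤ G s) :
    IntervalIntegrable (fun s => 1 / √(G s)) volume a b := by
  have hdom : IntervalIntegrable (fun s => (√k)⁻¹ * (b - s) ^ (-(1 / 2) : ℝ)) volume a b := by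
    have := ((intervalIntegral.intervalIntegrable_rpow' (a := 0) (b := b - a)
      (r := -(1 / 2)) (by norm_num)).comp_sub_left b).symm
    simpa using this.const_mul (√k)⁻¹
  rw [intervalIntegrable_iff_integrableOn_Ioo_of_le hab] at hdom ⊢
  refine hdom.mono' (Measurable.aestronglyMeasurable (by fun_prop)) ?_
  rw [ae_restrict_iff' measurableSet_Ioo]
  refine ae_of_all _ fun s hs => ?_
  have hbs : 0 < b - s := sub_pos.2 hs.2
  rw [Real.norm_of_nonneg (by positivity), Real.rpow_neg hbs.le, ← Real.sqrt_eq_rpow, ← mul_inv,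
    ← Real.sqrt_mul hk.le, ← one_div]
  exact one_div_le_one_div_of_le (by positivity)
    (Real.sqrt_le_sqrt (hbound s (Ioo_subset_Icc_self hs)))

theorem StrictMonoOn.exists_continuous_invOn_Icc {T : ℝ → ℝ} {a b : ℝ} (hab : a ≤ b)
    (hT : ContinuousOn T (Icc a b)) (hmono : StrictMonoOn T (Icc a b)) :
    ∃ w : ℝ → ℝ, Continuous w ∧ StrictMonoOn w (Icc (T a) (T b)) ∧
      MapsTo w (Icc (T a) (T b)) (Icc a b) ∧ InvOn w T (Icc a b) (Icc (T a) (T b)) := by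
  have hTab : T a ≤ T b := hmono.monotoneOn ⟨le_rfl, hab⟩ ⟨hab, le_rfl⟩ hab
  let e : Icc a b ≃o Icc (T a) (T b) := (hmono.orderIso T _).trans
    (OrderIso.setCongr _ _ (hT.image_Icc_of_monotoneOn hab hmono.monotoneOn))
  have he : ∀ u : Icc a b, (e u : ℝ) = T u := fun _ => rfl
  refine ⟨IccExtend hTab (fun y => (e.symm y : ℝ)),
    (continuous_subtype_val.comp e.symm.continuous).Icc_extend', ?_, ?_, ?_, ?_⟩
  · intro y hy z hz hyz
    rw [IccExtend_of_mem _ _ hy, IccExtend_of_mem _ _ hz]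
    exact e.symm.strictMono (Subtype.mk_lt_mk.2 hyz)
  · intro y hy
    rw [IccExtend_of_mem _ _ hy]
    exact (e.symm _).2
  · intro u hu
    rw [IccExtend_of_mem _ _ (he ⟨u, hu⟩ ▸ (e ⟨u, hu⟩).2)]
    exact congrArg Subtype.val (e.symm_apply_apply ⟨u, hu⟩)
  · intro y hy
    rw [IccExtend_of_mem _ _ hy, ← he, e.apply_symm_apply]

noncomputable def travelTime (G : ℝ → ℝ) (c u : ℝ) : ℝ := ∫ s in c..u, 1 / √(G s)

section travelTime

variable {G : ℝ → ℝ} {a b c u : ℝ}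

theorem travelTime_self (G : ℝ → ℝ) (c : ℝ) : travelTime G c c = 0 :=
  intervalIntegral.integral_same

theorem travelTime_pos (hint : IntervalIntegrable (fun s => 1 / √(G s)) volume c u)
    (hpos : ∀ s ∈ Ioo c u, 0 < G s) (hcu : c < u) : 0 < travelTime G c u :=
  intervalIntegral.intervalIntegral_pos_of_pos_on hint
    (fun s hs => one_div_pos.2 (Real.sqrt_pos.2 (hpos s hs))) hcu

theorem travelTime_neg (hint : IntervalIntegrable (fun s => 1 / √(G s)) volume a c)
    (hpos : ∀ s ∈ Ioo a c, 0 < G s) (hac : a < c) : travelTime G c a < 0 := by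
  rw [travelTime, intervalIntegral.integral_symm, neg_neg_iff_pos]
  exact travelTime_pos hint hpos hac

theorem hasDerivAt_travelTime (hG : Continuous G)
    (hint : IntervalIntegrable (fun s => 1 / √(G s)) volume c u) (hu : 0 < G u) :
    HasDerivAt (travelTime G c) (1 / √(G u)) u :=
  intervalIntegral.integral_hasDerivAt_right hint
    (Measurable.stronglyMeasurable (by fun_prop)).stronglyMeasurableAtFilter
    (continuousAt_const.div hG.sqrt.continuousAt (Real.sqrt_pos.2 hu).ne')

theorem continuousOn_travelTime (hint : IntervalIntegrable (fun s => 1 / √(G s)) volume a b)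
    (hc : c ∈ Icc a b) : ContinuousOn (travelTime G c) (Icc a b) := by
  have hab := hc.1.trans hc.2
  have := intervalIntegral.continuousOn_primitive_interval' hint (by rwa [uIcc_of_le hab])
  rwa [uIcc_of_le hab] at this

theorem strictMonoOn_travelTime (hG : Continuous G) (hpos : ∀ u ∈ Ioo a b, 0 < G u)
    (hint : IntervalIntegrable (fun s => 1 / √(G s)) volume a b) (hc : c ∈ Icc a b) :
    StrictMonoOn (travelTime G c) (Icc a b) := by
  refine strictMonoOn_of_deriv_pos (convex_Icc a b) (continuousOn_travelTime hint hc)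
    fun x hx => ?_
  rw [interior_Icc] at hx
  have hint' : IntervalIntegrable (fun s => 1 / √(G s)) volume c x :=
    hint.mono_set <| by
      rw [uIcc_of_le (hc.1.trans hc.2)]
      exact uIcc_subset_Icc hc (Ioo_subset_Icc_self hx)
  rw [(hasDerivAt_travelTime hG hint' (hpos x hx)).deriv]
  exact one_div_pos.2 (Real.sqrt_pos.2 (hpos x hx))

theorem exists_inverse_travelTime (hG : Continuous G) (hpos : ∀ u ∈ Ioo a b, 0 < G u)
    (hint : IntervalIntegrable (fun s => 1 / √(G s)) volume a b) (hc : c ∈ Icc a b) :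
    ∃ w : ℝ → ℝ, Continuous w ∧
      StrictMonoOn w (Icc (travelTime G c a) (travelTime G c b)) ∧
      MapsTo w (Icc (travelTime G c a) (travelTime G c b)) (Icc a b) ∧
      MapsTo w (Ioo (travelTime G c a) (travelTime G c b)) (Ioo a b) ∧
      InvOn w (travelTime G c) (Icc a b) (Icc (travelTime G c a) (travelTime G c b)) ∧
      ∀ y ∈ Ioo (travelTime G c a) (travelTime G c b), HasDerivAt w (√(G (w y))) y := by
  have hab := hc.1.trans hc.2
  obtain ⟨w, hwc, hwmono, hwmaps, hwinv⟩ := (strictMonoOn_travelTime hG hpos hint hc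
    ).exists_continuous_invOn_Icc hab (continuousOn_travelTime hint hc)
  have hIoo : MapsTo w (Ioo (travelTime G c a) (travelTime G c b)) (Ioo a b) := fun y hy => by
    have hy' := Ioo_subset_Icc_self hy
    constructor
    · rw [← hwinv.1 (left_mem_Icc.2 hab)]
      exact hwmono (left_mem_Icc.2 (hy.1.le.trans hy.2.le)) hy' hy.1
    · rw [← hwinv.1 (right_mem_Icc.2 hab)]
      exact hwmono hy' (right_mem_Icc.2 (hy.1.le.trans hy.2.le)) hy.2
  refine ⟨w, hwc, hwmono, hwmaps, hIoo, hwinv, fun y hy => ?_⟩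
  have hwy := hIoo hy
  have hint' : IntervalIntegrable (fun s => 1 / √(G s)) volume c (w y) :=
    hint.mono_set (by rw [uIcc_of_le hab]; exact uIcc_subset_Icc hc (Ioo_subset_Icc_self hwy))
  have := (hasDerivAt_travelTime hG hint' (hpos _ hwy)).of_local_left_inverse hwc.continuousAt
    (one_div_pos.2 (Real.sqrt_pos.2 (hpos _ hwy))).ne'
    (eventually_of_mem (isOpen_Ioo.mem_nhds hy) fun z hz => hwinv.2 (Ioo_subset_Icc_self hz))
  rwa [one_div, inv_inv] at this

end travelTime

theorem hasDerivAt_of_hasDerivAt_of_ne_of_mem_nhds {E : Type*} [NormedAddCommGroup E]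
    [NormedSpace ℝ E] {f g : ℝ → E} {x : ℝ} {s : Set ℝ} (hs : s ∈ 𝓝 x)
    (hdiff : ∀ y ∈ s, y ≠ x → HasDerivAt f (g y) y) (hf : ContinuousAt f x)
    (hg : ContinuousAt g x) : HasDerivAt f (g x) x := by
  have hdiff' : ∀ t : Set ℝ, x ∉ t → DifferentiableOn ℝ f (t ∩ s) := fun t ht y hy =>
    (hdiff y hy.2 (ne_of_mem_of_not_mem hy.1 ht)).differentiableAt.differentiableWithinAt
  have hlim : ∀ t : Set ℝ, x ∉ t → Tendsto (deriv f) (𝓝[t] x) (𝓝 (g x)) := fun t ht =>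
    (hg.tendsto.mono_left nhdsWithin_le_nhds).congr' (eventually_of_mem (inter_mem_nhdsWithin t hs)
      fun y hy => (hdiff y hy.2 (ne_of_mem_of_not_mem hy.1 ht)).deriv.symm)
  have hleft : HasDerivWithinAt f (g x) (Iic x) x :=
    hasDerivWithinAt_Iic_of_tendsto_deriv (hdiff' (Iio x) (lt_irrefl x)) hf.continuousWithinAt
      (inter_mem_nhdsWithin _ hs) (hlim (Iio x) (lt_irrefl x))
  have hright : HasDerivWithinAt f (g x) (Ici x) x :=
    hasDerivWithinAt_Ici_of_tendsto_deriv (hdiff' (Ioi x) (lt_irrefl x)) hf.continuousWithinAt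
      (inter_mem_nhdsWithin _ hs) (hlim (Ioi x) (lt_irrefl x))
  simpa using hleft.union hright

section Fold

variable {L x : ℝ}

theorem sub_abs_sub_of_le (hx : x ≤ L) : L - |x - L| = x := by
  rw [abs_of_nonpos (sub_nonpos.2 hx)]
  ring

theorem sub_abs_sub_of_ge (hx : L ≤ x) : L - |x - L| = 2 * L - x := by
  rw [abs_of_nonneg (sub_nonneg.2 hx)]
  ring

theorem sub_abs_sub_mem_Icc (hx : x ∈ Icc 0 (2 * L)) : L - |x - L| ∈ Icc 0 L :=
  ⟨sub_nonneg.2 (abs_le.2 ⟨by linarith [hx.1], by linarith [hx.2]⟩),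
    sub_le_self _ (abs_nonneg _)⟩

theorem sub_abs_sub_pos (hx : x ∈ Ioo 0 (2 * L)) : 0 < L - |x - L| :=
  sub_pos.2 (abs_lt.2 ⟨by linarith [hx.1], by linarith [hx.2]⟩)

end Fold

noncomputable def evenReflection (w : ℝ → ℝ) (L x : ℝ) : ℝ := w (L - |x - L|)

noncomputable def oddReflection (W : ℝ → ℝ) (L x : ℝ) : ℝ :=
  if x ≤ L then W x else -W (2 * L - x)

section Reflection

variable {w W φ : ℝ → ℝ} {p L x : ℝ}

theorem ContinuousWithinAt.continuousAt_evenReflection (hw : ContinuousWithinAt w (Iic L) L) :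
    ContinuousAt (evenReflection w L) L :=
  (continuousWithinAt_univ _ _).1 <| hw.comp_of_eq (s := univ)
    (by fun_prop : Continuous fun x : ℝ => L - |x - L|).continuousWithinAt
    (fun x _ => show L - |x - L| ≤ L by linarith [abs_nonneg (x - L)]) (by simp)

theorem evenReflection_of_le (hx : x ≤ L) : evenReflection w L x = w x :=
  congrArg w (sub_abs_sub_of_le hx)

theorem evenReflection_of_ge (hx : L ≤ x) : evenReflection w L x = w (2 * L - x) :=
  congrArg w (sub_abs_sub_of_ge hx)

theorem sq_oddReflection : oddReflection W L x ^ 2 = evenReflection W L x ^ 2 := by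
  by_cases hx : x ≤ L
  · rw [oddReflection, if_pos hx, evenReflection_of_le hx]
  · rw [oddReflection, if_neg hx, neg_sq, evenReflection_of_ge (not_le.1 hx).le]

theorem hasDerivAt_reflection_of_lt (hw : ∀ y ∈ Ioo p L, HasDerivAt w (W y) y)
    (hW : ∀ y ∈ Ioo p L, HasDerivAt W (φ (w y)) y) (hx : x ∈ Ioo p L) :
    HasDerivAt (evenReflection w L) (oddReflection W L x) x ∧
      HasDerivAt (oddReflection W L) (φ (evenReflection w L x)) x := by
  have hv : evenReflection w L =ᶠ[𝓝 x] w :=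
    eventually_of_mem (Iio_mem_nhds hx.2) fun y hy => evenReflection_of_le hy.le
  have hV : oddReflection W L =ᶠ[𝓝 x] W :=
    eventually_of_mem (Iio_mem_nhds hx.2) fun y hy => if_pos hy.le
  rw [hv.eq_of_nhds, hV.eq_of_nhds]
  exact ⟨(hw x hx).congr_of_eventuallyEq hv, (hW x hx).congr_of_eventuallyEq hV⟩

theorem hasDerivAt_reflection_of_gt (hw : ∀ y ∈ Ioo p L, HasDerivAt w (W y) y)
    (hW : ∀ y ∈ Ioo p L, HasDerivAt W (φ (w y)) y) (hx : x ∈ Ioo L (2 * L - p)) :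
    HasDerivAt (evenReflection w L) (oddReflection W L x) x ∧
      HasDerivAt (oddReflection W L) (φ (evenReflection w L x)) x := by
  have hx' : 2 * L - x ∈ Ioo p L := ⟨by linarith [hx.2], by linarith [hx.1]⟩
  have hv : evenReflection w L =ᶠ[𝓝 x] fun y => w (2 * L - y) :=
    eventually_of_mem (Ioi_mem_nhds hx.1) fun y hy => evenReflection_of_ge hy.le
  have hV : oddReflection W L =ᶠ[𝓝 x] fun y => -W (2 * L - y) :=
    eventually_of_mem (Ioi_mem_nhds hx.1) fun y hy => if_neg (not_le.2 hy)
  rw [hv.eq_of_nhds, hV.eq_of_nhds]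
  refine ⟨((hw _ hx').comp_const_sub _ x).congr_of_eventuallyEq hv, ?_⟩
  simpa using (((hW _ hx').comp_const_sub _ x).neg).congr_of_eventuallyEq hV

theorem hasDerivAt_reflection (hw : ∀ y ∈ Ioo p L, HasDerivAt w (W y) y)
    (hW : ∀ y ∈ Ioo p L, HasDerivAt W (φ (w y)) y) (hwL : ContinuousWithinAt w (Iic L) L)
    (hWL : ContinuousWithinAt W (Iic L) L) (hW0 : W L = 0) (hφ : ContinuousAt φ (w L))
    (hx : x ∈ Ioo p (2 * L - p)) :
    HasDerivAt (evenReflection w L) (oddReflection W L x) x ∧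
      HasDerivAt (oddReflection W L) (φ (evenReflection w L x)) x := by
  have hne : ∀ y ∈ Ioo p (2 * L - p), y ≠ L →
      HasDerivAt (evenReflection w L) (oddReflection W L y) y ∧
        HasDerivAt (oddReflection W L) (φ (evenReflection w L y)) y := fun y hy hyL =>
    hyL.lt_or_gt.elim (fun h => hasDerivAt_reflection_of_lt hw hW ⟨hy.1, h⟩)
      fun h => hasDerivAt_reflection_of_gt hw hW ⟨h, hy.2⟩
  by_cases hxL : x = L
  · rw [hxL]
    have hs : Ioo p (2 * L - p) ∈ 𝓝 L := isOpen_Ioo.mem_nhds (hxL ▸ hx)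
    have hvc : ContinuousAt (evenReflection w L) L := hwL.continuousAt_evenReflection
    have hVc : ContinuousAt (oddReflection W L) L := by
      have hnorm : ∀ y, ‖oddReflection W L y‖ = ‖evenReflection W L y‖ := fun y => by
        simp only [Real.norm_eq_abs, ← sq_eq_sq_iff_abs_eq_abs, sq_oddReflection]
      rw [ContinuousAt, show oddReflection W L L = 0 by simp [oddReflection, hW0],
        tendsto_zero_iff_norm_tendsto_zero]
      simpa [hnorm, evenReflection_of_le, hW0] using hWL.continuousAt_evenReflection.norm.tendsto
    exact ⟨hasDerivAt_of_hasDerivAt_of_ne_of_mem_nhds hs (fun y hy hyx => (hne y hy hyx).1)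
      hvc hVc, hasDerivAt_of_hasDerivAt_of_ne_of_mem_nhds hs
        (fun y hy hyx => (hne y hy hyx).2) hVc (hφ.comp_of_eq hvc (by simp [evenReflection]))⟩
  · exact hne x hx hxL

end Reflection

section SecondDerivative

variable {v V g : ℝ → ℝ} {I : Set ℝ}

theorem hasDerivAt_deriv_of_hasDerivAt (hI : IsOpen I) (hv : ∀ x ∈ I, HasDerivAt v (V x) x)
    (hV : ∀ x ∈ I, HasDerivAt V (g x) x) : ∀ x ∈ I, HasDerivAt (deriv v) (g x) x :=
  fun x hx => (hV x hx).congr_of_eventuallyEq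
    (eventually_of_mem (hI.mem_nhds hx) fun y hy => (hv y hy).deriv)

theorem contDiffOn_two_of_hasDerivAt (hI : IsOpen I) (hv : ∀ x ∈ I, HasDerivAt v (V x) x)
    (hV : ∀ x ∈ I, HasDerivAt V (g x) x) (hg : ContinuousOn g I) : ContDiffOn ℝ 2 v I := by
  have hv' := hasDerivAt_deriv_of_hasDerivAt hI hv hV
  rw [show (2 : WithTop ℕ∞) = 1 + 1 from rfl, contDiffOn_succ_iff_deriv_of_isOpen hI,
    show (1 : WithTop ℕ∞) = 0 + 1 from rfl, contDiffOn_succ_iff_deriv_of_isOpen hI,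
    contDiffOn_zero]
  exact ⟨fun x hx => (hv x hx).differentiableAt.differentiableWithinAt, by simp,
    fun x hx => (hv' x hx).differentiableAt.differentiableWithinAt, by simp,
    hg.congr fun x hx => (hv' x hx).deriv⟩

end SecondDerivative

theorem exists_lt_forall_pos_and_intervalIntegrable {G : ℝ → ℝ} {b c : ℝ}
    (hG : Continuous G) (hpos : ∀ u ∈ Ico c b, 0 < G u) (hcb : c < b) :
    ∃ a < c, (∀ u ∈ Ico a b, 0 < G u) ∧
      IntervalIntegrable (fun s => 1 / √(G s)) volume a c := by
  obtain ⟨a, hac, ha⟩ := mem_nhdsLT_iff_exists_Ico_subset.1 (nhdsWithin_le_nhds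
    (hG.continuousAt.eventually (lt_mem_nhds (hpos c ⟨le_rfl, hcb⟩))))
  have hpos' : ∀ u ∈ Ico a b, 0 < G u := fun u hu =>
    if h : u < c then ha ⟨hu.1, h⟩ else hpos u ⟨not_lt.1 h, hu.2⟩
  refine ⟨a, hac, hpos', ContinuousOn.intervalIntegrable_of_Icc hac.le ?_⟩
  exact continuousOn_const.div hG.sqrt.continuousOn fun u hu =>
    (Real.sqrt_pos.2 (hpos' u ⟨hu.1, hu.2.trans_lt hcb⟩)).ne'

theorem hasDerivAt_sqrt_comp_of_hasDerivAt_sqrt {G w : ℝ → ℝ} {d y : ℝ}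
    (hG : HasDerivAt G d (w y)) (hpos : 0 < G (w y)) (hw : HasDerivAt w (√(G (w y))) y) :
    HasDerivAt (fun z => √(G (w z))) (d / 2) y := by
  have hsqrt : √(G (w y)) ≠ 0 := (Real.sqrt_pos.2 hpos).ne'
  have h := (hG.comp y hw).sqrt hpos.ne'
  simp only [Function.comp_apply] at h
  convert h using 1
  field_simp

theorem exists_symmetric_solution_of_turningPoint {f G : ℝ → ℝ} {a b c L : ℝ}
    (hf : Continuous f) (hG : ∀ u, HasDerivAt G (-2 * f u) u) (hac : a < c) (hcb : c < b)
    (hpos : ∀ u ∈ Ico a b, 0 < G u) (hb : G b = 0)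
    (hint_left : IntervalIntegrable (fun s => 1 / √(G s)) volume a c)
    (hint_right : IntervalIntegrable (fun s => 1 / √(G s)) volume c b)
    (hL : travelTime G c b = L) :
    ∃ v : ℝ → ℝ, ContDiffOn ℝ 2 v (Icc 0 (2 * L)) ∧
      (∀ x ∈ Icc 0 (2 * L), deriv (deriv v) x + f (v x) = 0) ∧ v 0 = c ∧ v (2 * L) = c ∧
      (∀ x ∈ Ioo 0 (2 * L), c < v x ∧ v x ≤ b) ∧ v L = b ∧
      ∀ x ∈ Icc 0 (2 * L), deriv v x ^ 2 = G (v x) := by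
  have hGc : Continuous G := continuous_iff_continuousAt.2 fun u => (hG u).continuousAt
  have hc : c ∈ Icc a b := ⟨hac.le, hcb.le⟩
  have hpos' : ∀ u ∈ Ioo a b, 0 < G u := fun u hu => hpos u (Ioo_subset_Ico_self hu)
  have hnonneg : ∀ u ∈ Icc a b, 0 ≤ G u := fun u hu =>
    hu.2.eq_or_lt.elim (fun h => h ▸ hb.ge) fun h => (hpos u ⟨hu.1, h⟩).le
  have hLpos : 0 < L :=
    hL ▸ travelTime_pos hint_right (fun u hu => hpos' u ⟨hac.trans hu.1, hu.2⟩) hcb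
  have hp : travelTime G c a < 0 :=
    travelTime_neg hint_left (fun u hu => hpos' u ⟨hu.1, hu.2.trans hcb⟩) hac
  obtain ⟨w, hwc, hwmono, hwmaps, hwIoo, hwinv, hw⟩ :=
    exists_inverse_travelTime hGc hpos' (hint_left.trans hint_right) hc
  rw [hL] at hwmono hwmaps hwIoo hwinv hw
  set p := travelTime G c a
  have hw0 : w 0 = c := travelTime_self G c ▸ hwinv.1 hc
  have hwL : w L = b := hL ▸ hwinv.1 (right_mem_Icc.2 (hac.trans hcb).le)
  have hW : ∀ y ∈ Ioo p L, HasDerivAt (fun z => √(G (w z))) (-f (w y)) y := fun y hy => by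
    simpa [neg_div] using hasDerivAt_sqrt_comp_of_hasDerivAt_sqrt (hG (w y))
      (hpos' _ (hwIoo hy)) (hw y hy)
  have hderiv := fun x (hx : x ∈ Ioo p (2 * L - p)) => hasDerivAt_reflection (φ := fun u => -f u)
    hw hW hwc.continuousWithinAt (hGc.comp hwc).sqrt.continuousWithinAt (by simp [hwL, hb])
    hf.neg.continuousAt hx
  have hsub : Icc 0 (2 * L) ⊆ Ioo p (2 * L - p) := fun x hx =>
    ⟨by linarith [hx.1], by linarith [hx.2]⟩
  have hfold : ∀ x ∈ Icc 0 (2 * L), L - |x - L| ∈ Icc p L := fun x hx =>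
    Icc_subset_Icc_left hp.le (sub_abs_sub_mem_Icc hx)
  have hderiv2 := hasDerivAt_deriv_of_hasDerivAt isOpen_Ioo (fun x hx => (hderiv x hx).1)
    fun x hx => (hderiv x hx).2
  refine ⟨evenReflection w L, ?_, fun x hx => ?_, ?_, ?_, fun x hx => ?_, ?_, fun x hx => ?_⟩
  · exact (contDiffOn_two_of_hasDerivAt isOpen_Ioo (fun x hx => (hderiv x hx).1)
      (fun x hx => (hderiv x hx).2) (hf.comp (hwc.comp (by fun_prop))).neg.continuousOn).mono hsub
  · rw [(hderiv2 x (hsub hx)).deriv, neg_add_cancel]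
  · rw [evenReflection_of_le hLpos.le, hw0]
  · rw [evenReflection_of_ge (by linarith), sub_self, hw0]
  · have hx' := hfold x (Ioo_subset_Icc_self hx)
    refine ⟨?_, (hwmaps hx').2⟩
    rw [← hw0]
    exact hwmono ⟨hp.le, hLpos.le⟩ hx' (sub_abs_sub_pos hx)
  · rw [evenReflection_of_le le_rfl, hwL]
  · rw [(hderiv x (hsub hx)).1.deriv, sq_oddReflection, evenReflection,
      Real.sq_sqrt (hnonneg _ (hwmaps (hfold x hx))), evenReflection]

namespace CondF

variable {f : ℝ → ℝ} {α θ lam m : ℝ}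

theorem Fint_lt_Fint (hf : CondF f α θ lam) (hm : m ∈ Ioo θ 1) :
    ∀ s ∈ Ico 0 m, Fint f m < Fint f s := by
  have hc := hf.smooth.continuous
  have hmono := strictMonoOn_Fint hc hf.neg_low
  have hanti := strictAntiOn_Fint hc hf.pos_mid
  have hθ : θ ∈ Icc α 1 := ⟨hf.theta_gt.le, hf.theta_lt.le⟩
  have hmI : m ∈ Icc α 1 := ⟨(hf.theta_gt.trans hm.1).le, hm.2.le⟩
  have hFm : Fint f m < 0 := hf.F_theta ▸ hanti hθ hmI hm.1
  intro s hs
  rcases le_or_gt s α with hsα | hαs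
  · have := hmono.monotoneOn (left_mem_Icc.2 hf.alpha_pos.le) ⟨hs.1, hsα⟩ hs.1
    rw [Fint_zero] at this
    linarith
  rcases le_or_gt s θ with hsθ | hθs
  · have := hanti.antitoneOn ⟨hαs.le, hsθ.trans hf.theta_lt.le⟩ hθ hsθ
    rw [hf.F_theta] at this
    linarith
  · exact hanti ⟨hαs.le, (hs.2.trans hm.2).le⟩ hmI hs.2

theorem intervalIntegrable_one_div_sqrt (hf : CondF f α θ lam) (hm : m ∈ Ioo θ 1) :
    IntervalIntegrable (fun s => 1 / √(Fint f s - Fint f m)) volume 0 m := by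
  have hc := hf.smooth.continuous
  have hG : Continuous fun s => Fint f s - Fint f m := (continuous_Fint hc).sub continuous_const
  obtain ⟨s₀, hs₀, hmin⟩ := isCompact_Icc.exists_isMinOn (nonempty_Icc.2 hm.1.le) hc.continuousOn
  have hfs₀ : 0 < f s₀ := hf.pos_mid s₀ ⟨hf.theta_gt.trans_le hs₀.1, hs₀.2.trans_lt hm.2⟩
  have hnear : IntervalIntegrable (fun s => 1 / √(Fint f s - Fint f m)) volume θ m :=
    intervalIntegrable_one_div_sqrt_of_mul_sub_le hG hm.1.le (by positivity) fun s hs =>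
      mul_sub_le_Fint_sub_Fint hc hs.2 fun x hx => hmin ⟨hs.1.trans hx.1, hx.2⟩
  have hfar : IntervalIntegrable (fun s => 1 / √(Fint f s - Fint f m)) volume 0 θ :=
    ContinuousOn.intervalIntegrable_of_Icc (hf.alpha_pos.trans hf.theta_gt).le
      (continuousOn_const.div hG.sqrt.continuousOn fun x hx => (Real.sqrt_pos.2 (sub_pos.2
        (hf.Fint_lt_Fint hm x ⟨hx.1, hx.2.trans_lt hm.1⟩))).ne')
  exact hfar.trans hnear

end CondF

theorem stmt6 (f : ℝ → ℝ) (α θ lam : ℝ) (hf : CondF f α θ lam)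
    (m : ℝ) (hm : m ∈ Set.Ioo θ (1:ℝ)) (L : ℝ)
    (hL : L = ∫ s in (0:ℝ)..m, 1 / Real.sqrt (Fint f s - Fint f m)) :
    (∀ s ∈ Set.Ico (0:ℝ) m, Fint f m < Fint f s) ∧
    IntervalIntegrable (fun s => 1 / Real.sqrt (Fint f s - Fint f m))
      MeasureTheory.volume 0 m ∧
    0 < L ∧
    ∃ v : ℝ → ℝ,
      ContDiffOn ℝ 2 v (Set.Icc 0 (2 * L)) ∧
      (∀ x ∈ Set.Icc (0:ℝ) (2 * L), deriv (deriv v) x + f (v x) = 0) ∧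
      v 0 = 0 ∧ v (2 * L) = 0 ∧
      (∀ x ∈ Set.Ioo (0:ℝ) (2 * L), 0 < v x ∧ v x ≤ m) ∧
      v L = m ∧
      (∀ x ∈ Set.Icc (0:ℝ) (2 * L), (deriv v x) ^ 2 = Fint f (v x) - Fint f m) := by
  have hc := hf.smooth.continuous
  have hm0 : 0 < m := (hf.alpha_pos.trans hf.theta_gt).trans hm.1
  have hlt := hf.Fint_lt_Fint hm
  have hint := hf.intervalIntegrable_one_div_sqrt hm
  have hpos : ∀ u ∈ Ico 0 m, 0 < Fint f u - Fint f m := fun u hu => sub_pos.2 (hlt u hu)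
  obtain ⟨a, ha, hpos', hint'⟩ := exists_lt_forall_pos_and_intervalIntegrable
    ((continuous_Fint hc).sub continuous_const) hpos hm0
  refine ⟨hlt, hint,
    hL ▸ travelTime_pos hint (fun u hu => hpos u (Ioo_subset_Ico_self hu)) hm0,
    exists_symmetric_solution_of_turningPoint hc (fun u => (hasDerivAt_Fint hc u).sub_const _)
      ha hm0 hpos' (sub_self _) hint' hint hL.symm⟩
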